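/- Let φ_h : ℝ^n → GL(2n+2, ℝ) be defined, for v ∈ ℝ^n, by φ_h(v)·(ζ^0, ζ^a, 𝜁̃_0, 𝜁̃_a) = (ζ^0, ζ^a + ζ^0 v^a, 𝜁̃_0 + (1/6)k_{abc}v^av^bv^cζ^0 + (1/2)k_{abc}v^av^bζ^c - 𝜁̃_av^a, 𝜁̃_a - (1/2)ζ^0k_{abc}v^bv^c - k_{abc}v^bζ^c). Then (i) φ_h(v + v') = φ_h(v) ∘ φ_h(v') for all v, v' ∈ ℝ^n, and (ii) each φ_h(v) preserves the standard symplectic form ⟨(𝜁̃, ζ), (η̃, η)⟩ = 𝜁̃_i η^i - ζ^i η̃_i on ℝ^{2n+2}, i.e., φ_h(v) ∈ Sp(2n+2, ℝ). -/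
import Mathlib


open Finset

noncomputable section

/-- point `(ζ⁰, ζᵃ, ζ̃₀, ζ̃ₐ) ∈ ℝ^{2n+2}`. -/
abbrev ZPt (n : ℕ) := ℝ × (Fin n → ℝ) × ℝ × (Fin n → ℝ)

/-- the map `φ_h(v)` on `(ζ⁰, ζᵃ, ζ̃₀, ζ̃ₐ)`. -/
def phiH {n : ℕ} (k : Fin n → Fin n → Fin n → ℝ) (v : Fin n → ℝ) :
    ZPt n → ZPt n :=
  fun (ζ₀, ζ, ζt₀, ζt) =>
    (ζ₀,
     fun a => ζ a + ζ₀ * v a,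
     ζt₀ + (1/6) * (∑ a, ∑ b, ∑ c, k a b c * v a * v b * v c) * ζ₀
       + (1/2) * (∑ a, ∑ b, ∑ c, k a b c * v a * v b * ζ c)
       - ∑ a, ζt a * v a,
     fun a => ζt a - (1/2) * ζ₀ * (∑ b, ∑ c, k a b c * v b * v c)
       - ∑ b, ∑ c, k a b c * v b * ζ c)

/-- the standard symplectic pairing `⟨(ζ̃,ζ),(η̃,η)⟩ = ζ̃ᵢηⁱ - ζⁱη̃ᵢ`. -/
def symplPair {n : ℕ} (x y : ZPt n) : ℝ :=
  x.2.2.1 * y.1 + (∑ a, x.2.2.2 a * y.2.1 a)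
    - x.1 * y.2.2.1 - ∑ a, x.2.1 a * y.2.2.2 a


namespace StmtNineAux
variable {n : ℕ} (k : Fin n → Fin n → Fin n → ℝ)

def T (u w z : Fin n → ℝ) : ℝ := ∑ a, ∑ b, ∑ c, k a b c * u a * w b * z c
def Q (u w : Fin n → ℝ) (a : Fin n) : ℝ := ∑ b, ∑ c, k a b c * u b * w c

lemma T_swap12 (h : ∀ a b c, k a b c = k b a c) (u w z : Fin n → ℝ) :
    T k u w z = T k w u z := by
  unfold T
  rw [Finset.sum_comm]
  exact sum_congr rfl fun a _ => sum_congr rfl fun b _ => sum_congr rfl fun c _ => by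
    rw [h b a c]; ring

lemma T_swap23 (h : ∀ a b c, k a b c = k a c b) (u w z : Fin n → ℝ) :
    T k u w z = T k u z w := by
  unfold T
  refine sum_congr rfl fun a _ => ?_
  rw [Finset.sum_comm]
  exact sum_congr rfl fun b _ => sum_congr rfl fun c _ => by
    rw [h a c b]; ring

lemma Q_swap (h : ∀ a b c, k a b c = k a c b) (u w : Fin n → ℝ) (a : Fin n) :
    Q k u w a = Q k w u a := by
  unfold Q
  rw [Finset.sum_comm]
  exact sum_congr rfl fun b _ => sum_congr rfl fun c _ => by rw [h a c b]; ring

lemma Q_add1 (u u' w : Fin n → ℝ) (a : Fin n) :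
    Q k (u + u') w a = Q k u w a + Q k u' w a := by
  unfold Q
  simp only [Pi.add_apply, mul_add, add_mul, Finset.sum_add_distrib]

lemma Q_add2 (u w w' : Fin n → ℝ) (a : Fin n) :
    Q k u (w + w') a = Q k u w a + Q k u w' a := by
  unfold Q
  simp only [Pi.add_apply, mul_add, add_mul, Finset.sum_add_distrib]

lemma Q_aff2 (u w w' : Fin n → ℝ) (r : ℝ) (a : Fin n) :
    Q k u (fun c => w c + r * w' c) a = Q k u w a + r * Q k u w' a := by
  unfold Q
  rw [Finset.mul_sum, ← Finset.sum_add_distrib]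
  refine sum_congr rfl fun b _ => ?_
  rw [Finset.mul_sum, ← Finset.sum_add_distrib]
  exact sum_congr rfl fun c _ => by ring

lemma contr (u w v : Fin n → ℝ) :
    ∑ a, Q k u w a * v a = T k v u w := by
  unfold Q T
  refine sum_congr rfl fun a _ => ?_
  rw [Finset.sum_mul]
  refine sum_congr rfl fun b _ => ?_
  rw [Finset.sum_mul]
  exact sum_congr rfl fun c _ => by ring

lemma T_add1 (u u' w z : Fin n → ℝ) :
    T k (u + u') w z = T k u w z + T k u' w z := by
  unfold T
  simp only [Pi.add_apply, mul_add, add_mul, Finset.sum_add_distrib]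

lemma T_add2 (u w w' z : Fin n → ℝ) :
    T k u (w + w') z = T k u w z + T k u w' z := by
  unfold T
  simp only [Pi.add_apply, mul_add, add_mul, Finset.sum_add_distrib]

lemma T_add3 (u w z z' : Fin n → ℝ) :
    T k u w (z + z') = T k u w z + T k u w z' := by
  unfold T
  simp only [Pi.add_apply, mul_add, add_mul, Finset.sum_add_distrib]

lemma T_aff3 (u w z z' : Fin n → ℝ) (r : ℝ) :
    T k u w (fun c => z c + r * z' c) = T k u w z + r * T k u w z' := by
  unfold T
  rw [Finset.mul_sum, ← Finset.sum_add_distrib]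
  refine sum_congr rfl fun a _ => ?_
  rw [Finset.mul_sum, ← Finset.sum_add_distrib]
  refine sum_congr rfl fun b _ => ?_
  rw [Finset.mul_sum, ← Finset.sum_add_distrib]
  exact sum_congr rfl fun c _ => by ring

lemma sum_mul_add (zt v v' : Fin n → ℝ) :
    ∑ a, zt a * (v + v') a = ∑ a, zt a * v a + ∑ a, zt a * v' a := by
  simp only [Pi.add_apply, mul_add, Finset.sum_add_distrib]

lemma contr' (u w zt v : Fin n → ℝ) (r : ℝ) :
    ∑ a, (zt a - r * Q k u u a - Q k u w a) * v a
      = ∑ a, zt a * v a - r * T k v u u - T k v u w := by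
  have h : ∀ a, (zt a - r * Q k u u a - Q k u w a) * v a
      = zt a * v a - r * (Q k u u a * v a) - Q k u w a * v a := fun a => by ring
  simp only [h, Finset.sum_sub_distrib, ← Finset.mul_sum, contr]

lemma contr2 (u z zt e v : Fin n → ℝ) (r s : ℝ) :
    ∑ a, (zt a - r * Q k u u a - Q k u z a) * (e a + s * v a)
      = ∑ a, zt a * e a + s * ∑ a, zt a * v a - r * T k e u u
        - r * s * T k v u u - T k e u z - s * T k v u z := by
  have h : ∀ a, (zt a - r * Q k u u a - Q k u z a) * (e a + s * v a)
      = zt a * e a + s * (zt a * v a) - r * (Q k u u a * e a)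
        - r * s * (Q k u u a * v a) - Q k u z a * e a - s * (Q k u z a * v a) :=
    fun a => by ring
  simp only [h, Finset.sum_sub_distrib, Finset.sum_add_distrib, ← Finset.mul_sum, contr]

lemma contr3 (u z w et v : Fin n → ℝ) (r s : ℝ) :
    ∑ a, (w a + s * v a) * (et a - r * Q k u u a - Q k u z a)
      = ∑ a, w a * et a + s * ∑ a, v a * et a - r * T k w u u
        - r * s * T k v u u - T k w u z - s * T k v u z := by
  have h : ∀ a, (w a + s * v a) * (et a - r * Q k u u a - Q k u z a)
      = w a * et a + s * (v a * et a) - r * (Q k u u a * w a)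
        - r * s * (Q k u u a * v a) - Q k u z a * w a - s * (Q k u z a * v a) :=
    fun a => by ring
  simp only [h, Finset.sum_sub_distrib, Finset.sum_add_distrib, ← Finset.mul_sum, contr]

lemma homo3 (h12 : ∀ a b c, k a b c = k b a c) (h23 : ∀ a b c, k a b c = k a c b)
    (v v' ζ ζt : Fin n → ℝ) (ζ₀ ζt₀ : ℝ) :
    ζt₀ + 1/6 * T k (v + v') (v + v') (v + v') * ζ₀
      + 1/2 * T k (v + v') (v + v') ζ - ∑ a, ζt a * (v + v') a
    = ζt₀ + 1/6 * T k v' v' v' * ζ₀ + 1/2 * T k v' v' ζ - ∑ a, ζt a * v' a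
        + 1/6 * T k v v v * ζ₀ + 1/2 * T k v v (fun c => ζ c + ζ₀ * v' c)
        - ∑ a, (ζt a - 1/2 * ζ₀ * Q k v' v' a - Q k v' ζ a) * v a := by
  have e1 : T k v v' v = T k v v v' := T_swap23 k h23 v v' v
  have e2 : T k v' v v = T k v v v' := by
    rw [T_swap12 k h12 v' v v]; exact e1
  have e3 : T k v' v v' = T k v v' v' := T_swap12 k h12 v' v v'
  have e4 : T k v' v' v = T k v v' v' := by
    rw [T_swap23 k h23 v' v' v]; exact T_swap12 k h12 v' v v'
  have e5 : T k v' v ζ = T k v v' ζ := T_swap12 k h12 v' v ζ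
  simp only [T_add1, T_add2, T_add3, T_aff3, contr', sum_mul_add, e1, e2, e3, e4, e5]
  ring

lemma homo4 (h23 : ∀ a b c, k a b c = k a c b)
    (v v' ζ : Fin n → ℝ) (ζ₀ : ℝ) (ζt : Fin n → ℝ) (a : Fin n) :
    ζt a - 1/2 * ζ₀ * Q k (v + v') (v + v') a - Q k (v + v') ζ a
    = ζt a - 1/2 * ζ₀ * Q k v' v' a - Q k v' ζ a - 1/2 * ζ₀ * Q k v v a
        - Q k v (fun c => ζ c + ζ₀ * v' c) a := by
  have e : Q k v' v a = Q k v v' a := Q_swap k h23 v' v a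
  simp only [Q_add1, Q_add2, Q_aff2, e]
  ring

lemma symp (h12 : ∀ a b c, k a b c = k b a c) (h23 : ∀ a b c, k a b c = k a c b)
    (v ζ η ζt ηt : Fin n → ℝ) (p q pt qt : ℝ) :
    (pt + 1/6 * T k v v v * p + 1/2 * T k v v ζ - ∑ a, ζt a * v a) * q
      + (∑ a, (ζt a - 1/2 * p * Q k v v a - Q k v ζ a) * (η a + q * v a))
      - p * (qt + 1/6 * T k v v v * q + 1/2 * T k v v η - ∑ a, ηt a * v a)
      - ∑ a, (ζ a + p * v a) * (ηt a - 1/2 * q * Q k v v a - Q k v η a)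
    = pt * q + (∑ a, ζt a * η a) - p * qt - ∑ a, ζ a * ηt a := by
  rw [contr2 k v ζ ζt η v (1/2 * p) q, contr3 k v η ζ ηt v (1/2 * q) p]
  have e0 : ∑ a, v a * ηt a = ∑ a, ηt a * v a :=
    sum_congr rfl fun a _ => mul_comm _ _
  have s1 : T k η v v = T k v v η := by
    rw [T_swap12 k h12 η v v]; exact T_swap23 k h23 v η v
  have s2 : T k ζ v v = T k v v ζ := by
    rw [T_swap12 k h12 ζ v v]; exact T_swap23 k h23 v ζ v
  have s3 : T k η v ζ = T k ζ v η := by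
    rw [T_swap12 k h12 η v ζ, T_swap23 k h23 v η ζ]
    exact (T_swap12 k h12 ζ v η).symm
  rw [e0, s1, s2, s3]
  ring

end StmtNineAux

/-- `φ_h : ℝⁿ → GL(2n+2,ℝ)` is a homomorphism
(`φ_h(v+v') = φ_h(v) ∘ φ_h(v')`) and each `φ_h(v)` preserves the standard
symplectic form, i.e. `φ_h(v) ∈ Sp(2n+2,ℝ)`. -/
theorem stmt_9 {n : ℕ} (k : Fin n → Fin n → Fin n → ℝ)
    (hsymm : ∀ a b c, k a b c = k b a c ∧ k a b c = k a c b) :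
    (∀ v v' : Fin n → ℝ, phiH k (v + v') = phiH k v ∘ phiH k v') ∧
    (∀ (v : Fin n → ℝ) (x y : ZPt n),
      symplPair (phiH k v x) (phiH k v y) = symplPair x y) := by
  have h12 : ∀ a b c, k a b c = k b a c := fun a b c => (hsymm a b c).1
  have h23 : ∀ a b c, k a b c = k a c b := fun a b c => (hsymm a b c).2
  constructor
  · intro v v'
    funext x
    obtain ⟨ζ₀, ζ, ζt₀, ζt⟩ := x
    simp only [phiH, Function.comp_apply, Prod.mk.injEq]
    refine ⟨trivial, ?_, ?_, ?_⟩
    · funext a; simp only [Pi.add_apply]; ring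
    · exact StmtNineAux.homo3 k h12 h23 v v' ζ ζt ζ₀ ζt₀
    · funext a; exact StmtNineAux.homo4 k h23 v v' ζ ζ₀ ζt a
  · intro v x y
    obtain ⟨p, ζ, pt, ζt⟩ := x
    obtain ⟨q, η, qt, ηt⟩ := y
    simp only [phiH, symplPair]
    exact StmtNineAux.symp k h12 h23 v ζ η ζt ηt p q pt qt

end
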